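/- arXiv:1704.07977 — 3 statements merged into one kernel-verified Lean document; each statement's English description precedes it below -/
import Mathlib

section
/- Let Z_1,…,Z_N be i.i.d. real random variables with continuous distribution function F, with N = m+n odd, and let Z be the ((N+1)/2)-th order statistic of the combined sample. Then the statistic M† = #{ i ≤ m : Z_i < Z } (the number of the first m observations lying strictly below the combined sample median) follows the hypergeometric distribution HG(N, m, (N−1)/2): for every integer u with 0 ≤ u ≤ (N−1)/2, P(M† = u) = C(m,u) C(n, (N−1)/2 − u) / C(N, (N−1)/2). In particular E[M†] = (m/2)(1 − 1/(m+n)). -/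
/-!
Ties have probability zero because the distribution function is continuous, so almost surely
exactly `k = (N - 1) / 2` observations lie strictly below the `(k + 1)`-th order statistic.
The sample is exchangeable and permuting it permutes this random set `B` of indices, so
`P(B = S)` depends only on `|S|`: `B` is uniform on the `k`-subsets of the `N` indices, and
counting those that meet the first `m` indices in `u` points gives the hypergeometric law.
By exchangeability again every index lies in `B` with the same probability, which is `k / N`
because `|B| = k`; hence `E[M†] = m k / N`.
-/

open MeasureTheory ProbabilityTheory Filter Asymptotics Set
open scoped Topology ENNReal NNReal BigOperators

noncomputable section

/-- The `k`-th order statistic (1-indexed) of a finite sample: the smallest point `x`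
such that at least `k` of the observations are `≤ x`. -/
def orderStat {N : ℕ} (w : Fin N → ℝ) (k : ℕ) : ℝ :=
  sInf {x : ℝ | k ≤ (Finset.univ.filter fun i => w i ≤ x).card}

/-- The sample median: the `((N+1)/2)`-th order statistic for odd `N`, the average of the
`(N/2)`-th and `(N/2+1)`-th order statistics for even `N`. -/
def sampleMedian {N : ℕ} (w : Fin N → ℝ) : ℝ :=
  if N % 2 = 1 then orderStat w ((N + 1) / 2)
  else (orderStat w (N / 2) + orderStat w (N / 2 + 1)) / 2

/-- The measure on `ℝ` with Lebesgue density `f`. -/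
def densMeasure (f : ℝ → ℝ) : Measure ℝ :=
  MeasureTheory.volume.withDensity fun x => ENNReal.ofReal (f x)

/-- Joint law of the two independent samples: `X_1, …, X_m` i.i.d. with density `f`
and `Y_1, …, Y_n` i.i.d. with density `f(· - θ)`, all independent. -/
def twoSampleLaw (f : ℝ → ℝ) (m n : ℕ) (θ : ℝ) :
    Measure ((Fin m → ℝ) × (Fin n → ℝ)) :=
  (Measure.pi fun _ : Fin m => densMeasure f).prod
    (Measure.pi fun _ : Fin n => (densMeasure f).map (· + θ))

/-- Integrated kernel `K(t) = ∫_{-∞}^t k(u) du`. -/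
def Kfun (k : ℝ → ℝ) (t : ℝ) : ℝ := ∫ u in Set.Iic t, k u

/-- The median test statistic `M† = ∑_{i=1}^m ψ*(Z - X_i)` with `ψ*(x) = 1` for `x > 0`. -/
def MdagStat {m n : ℕ} (p : (Fin m → ℝ) × (Fin n → ℝ)) : ℝ :=
  ∑ i : Fin m, if 0 < sampleMedian (Fin.append p.1 p.2) - p.1 i then (1:ℝ) else 0

/-- The smoothed median test statistic `M̃ = ∑_{i=1}^m K*((Z - X_i)/h)`. -/
def MtilStat (kstar : ℝ → ℝ) (h : ℝ) {m n : ℕ} (p : (Fin m → ℝ) × (Fin n → ℝ)) : ℝ :=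
  ∑ i : Fin m, Kfun kstar ((sampleMedian (Fin.append p.1 p.2) - p.1 i) / h)

/-- The Wilcoxon rank sum statistic `W₂ = ∑_i ∑_j ψ(Y_j - X_i)` with `ψ(x) = 1` for `x ≥ 0`. -/
def W2Stat {m n : ℕ} (p : (Fin m → ℝ) × (Fin n → ℝ)) : ℝ :=
  ∑ i : Fin m, ∑ j : Fin n, if 0 ≤ p.2 j - p.1 i then (1:ℝ) else 0

/-- The smoothed Wilcoxon statistic `W̃₂ = ∑_i ∑_j K((Y_j - X_i)/h)`. -/
def WtilStat (k : ℝ → ℝ) (h : ℝ) {m n : ℕ} (p : (Fin m → ℝ) × (Fin n → ℝ)) : ℝ :=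
  ∑ i : Fin m, ∑ j : Fin n, Kfun k ((p.2 j - p.1 i) / h)

/-- The standard normal distribution function `Φ`. -/
def stdGaussCDF (x : ℝ) : ℝ :=
  ((ProbabilityTheory.gaussianReal 0 1) (Set.Iic x)).toReal

/-- The Beta function `B(a,b) = ∫_0^1 t^{a-1} (1-t)^{b-1} dt`. -/
def Beta (a b : ℝ) : ℝ := ∫ t in Set.Ioo (0:ℝ) 1, t ^ (a - 1) * (1 - t) ^ (b - 1)

section OrderStatistics

variable {N : ℕ}

lemma isClosed_setOf_le_card_filter_le (w : Fin N → ℝ) (r : ℕ) :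
    IsClosed {x : ℝ | r ≤ (Finset.univ.filter fun i => w i ≤ x).card} := by
  have h : {x : ℝ | r ≤ (Finset.univ.filter fun i => w i ≤ x).card} =
      ⋃ S ∈ Finset.univ.powersetCard r, ⋂ i ∈ S, Ici (w i) := by
    ext x
    simp only [mem_ofPred_eq, mem_iUnion, mem_iInter, mem_Ici, Finset.mem_powersetCard,
      exists_prop]
    constructor
    · intro h
      obtain ⟨S, hS, hcard⟩ := Finset.exists_subset_card_eq h
      exact ⟨S, ⟨Finset.subset_univ S, hcard⟩, fun i hi => (Finset.mem_filter.1 (hS hi)).2⟩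
    · rintro ⟨S, ⟨-, rfl⟩, hS⟩
      exact Finset.card_le_card fun i hi => Finset.mem_filter.2 ⟨Finset.mem_univ i, hS i hi⟩
  rw [h]
  exact isClosed_biUnion_finset fun S _ => isClosed_biInter fun i _ => isClosed_Ici

lemma orderStat_le_iff {w : Fin N → ℝ} {r : ℕ} (hr : 1 ≤ r) (hrN : r ≤ N) {t : ℝ} :
    orderStat w r ≤ t ↔ r ≤ (Finset.univ.filter fun i => w i ≤ t).card := by
  set T := {x : ℝ | r ≤ (Finset.univ.filter fun i => w i ≤ x).card}
  have : Nonempty (Fin N) := ⟨⟨0, by omega⟩⟩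
  have hbdd : BddBelow T := ⟨Finset.univ.inf' Finset.univ_nonempty w, fun x hx => by
    obtain ⟨i, hi⟩ := Finset.card_pos.1 (lt_of_lt_of_le hr hx)
    exact (Finset.inf'_le w (Finset.mem_univ i)).trans (Finset.mem_filter.1 hi).2⟩
  have hne : T.Nonempty := ⟨Finset.univ.sup' Finset.univ_nonempty w, by
    show r ≤ _
    rwa [Finset.filter_true_of_mem fun i _ => Finset.le_sup' w (Finset.mem_univ i),
      Finset.card_univ, Fintype.card_fin]⟩
  have hmem : orderStat w r ∈ T := (isClosed_setOf_le_card_filter_le w r).csInf_mem hne hbdd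
  refine ⟨fun h => hmem.trans (Finset.card_le_card ?_), fun h => csInf_le hbdd h⟩
  exact Finset.monotone_filter_right _ fun i _ hi => hi.trans h

lemma measurable_orderStat {r : ℕ} (hr : 1 ≤ r) (hrN : r ≤ N) :
    Measurable fun w : Fin N → ℝ => orderStat w r := by
  refine measurable_of_Iic fun t => ?_
  have h : (fun w : Fin N → ℝ => orderStat w r) ⁻¹' Iic t =
      (fun w : Fin N → ℝ => ∑ i, if w i ≤ t then 1 else 0) ⁻¹' {k | r ≤ k} := by
    ext w
    simp only [mem_preimage, mem_Iic, orderStat_le_iff hr hrN, Finset.card_filter]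
    rfl
  rw [h]
  exact (Finset.measurable_sum _ fun i _ => Measurable.ite
    (measurableSet_le (measurable_pi_apply i) measurable_const) measurable_const
    measurable_const) MeasurableSet.of_discrete

lemma orderStat_comp_perm (w : Fin N → ℝ) (σ : Equiv.Perm (Fin N)) (r : ℕ) :
    orderStat (w ∘ σ) r = orderStat w r := by
  unfold orderStat
  congr 1
  ext x
  simp only [mem_ofPred_eq, Function.comp_apply]
  rw [Finset.card_equiv σ (t := Finset.univ.filter fun i => w i ≤ x) (by simp)]

def belowOrderStat (w : Fin N → ℝ) (r : ℕ) : Finset (Fin N) :=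
  Finset.univ.filter fun i => w i < orderStat w r

@[simp]
lemma mem_belowOrderStat {w : Fin N → ℝ} {r : ℕ} {i : Fin N} :
    i ∈ belowOrderStat w r ↔ w i < orderStat w r := by
  simp [belowOrderStat]

lemma mem_belowOrderStat_comp_perm {w : Fin N → ℝ} {r : ℕ} {σ : Equiv.Perm (Fin N)}
    {i : Fin N} : i ∈ belowOrderStat (w ∘ σ) r ↔ σ i ∈ belowOrderStat w r := by
  simp [orderStat_comp_perm]

lemma card_belowOrderStat {w : Fin N → ℝ} (hw : Function.Injective w) {r : ℕ}
    (hr : 1 ≤ r) (hrN : r ≤ N) : (belowOrderStat w r).card = r - 1 := by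
  set v := orderStat w r
  set B := belowOrderStat w r
  have hlt : B.card < r := by
    by_contra! h
    obtain ⟨j, hjB, hj⟩ := Finset.exists_max_image B w (Finset.card_pos.1 (by omega))
    have : v ≤ w j := (orderStat_le_iff hr hrN).2 <| h.trans <|
      Finset.card_le_card fun i hi => Finset.mem_filter.2 ⟨Finset.mem_univ i, hj i hi⟩
    exact (mem_belowOrderStat.1 hjB).not_ge this
  have hge : r ≤ B.card + 1 := calc
    r ≤ (Finset.univ.filter fun i => w i ≤ v).card := (orderStat_le_iff hr hrN).1 le_rfl
    _ ≤ (B ∪ Finset.univ.filter fun i => w i = v).card := Finset.card_le_card fun i hi => by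
        simpa [B, le_iff_lt_or_eq] using hi
    _ ≤ B.card + (Finset.univ.filter fun i => w i = v).card := Finset.card_union_le _ _
    _ ≤ B.card + 1 := by
        gcongr
        exact Finset.card_le_one.2 fun a ha b hb =>
          hw ((Finset.mem_filter.1 ha).2.trans (Finset.mem_filter.1 hb).2.symm)
  omega

end OrderStatistics

lemma card_filter_powersetCard_card_inter {α : Type*} [Fintype α] [DecidableEq α]
    (A : Finset α) {k u : ℕ} (hu : u ≤ k) :
    ((Finset.univ.powersetCard k).filter fun S => (A ∩ S).card = u).card =
      A.card.choose u * (Fintype.card α - A.card).choose (k - u) := by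
  rw [← Finset.card_compl, ← Finset.card_powersetCard, ← Finset.card_powersetCard,
    ← Finset.card_product]
  refine Finset.card_nbij' (fun S => (A ∩ S, S \ A)) (fun P => P.1 ∪ P.2) ?_ ?_ ?_ ?_ <;>
    intro S hS <;>
    simp only [Finset.mem_coe, Finset.mem_filter, Finset.mem_product, Finset.mem_powersetCard,
      Finset.subset_univ, true_and] at hS ⊢
  · have := Finset.card_sdiff_add_card_inter S A
    rw [Finset.inter_comm] at this
    exact ⟨⟨Finset.inter_subset_left, hS.2⟩, fun x hx => by simp_all, by omega⟩
  · obtain ⟨⟨h1, hcard1⟩, h2, hcard2⟩ := hS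
    have hdisj : Disjoint S.1 S.2 :=
      Finset.disjoint_of_subset_left h1 (Finset.disjoint_of_subset_right h2 disjoint_compl_right)
    have hinter : A ∩ (S.1 ∪ S.2) = S.1 := by
      ext x
      grind [Finset.mem_compl]
    rw [Finset.card_union_of_disjoint hdisj, hinter]
    omega
  · grind
  · obtain ⟨⟨h1, -⟩, h2, -⟩ := hS
    refine Prod.ext ?_ ?_ <;> ext x <;> grind [Finset.mem_compl]

lemma nullSingletonClass_of_continuous_cdf (μ : Measure ℝ) [IsProbabilityMeasure μ]
    (hF : Continuous fun x => (μ (Iic x)).toReal) : NullSingletonClass μ := by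
  have hcdf : Continuous (cdf μ) := by
    convert hF using 1
    exact funext fun x => cdf_eq_real μ x
  refine ⟨fun x => ?_⟩
  rw [← measure_cdf μ, StieltjesFunction.measure_singleton,
    hcdf.continuousAt.continuousWithinAt.leftLim_eq, sub_self, ENNReal.ofReal_zero]

lemma measure_preimage_singleton_eq_inv_card {Ω α : Type*} [MeasurableSpace Ω]
    {μ : Measure Ω} [IsProbabilityMeasure μ] {f : Ω → α} {s : Finset α}
    (hf : ∀ a ∈ s, MeasurableSet (f ⁻¹' {a})) (hs : ∀ᵐ ω ∂μ, f ω ∈ s)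
    (hconst : ∀ a ∈ s, ∀ b ∈ s, μ (f ⁻¹' {a}) = μ (f ⁻¹' {b})) {a : α} (ha : a ∈ s) :
    μ (f ⁻¹' {a}) = (s.card : ℝ≥0∞)⁻¹ := by
  have hsum : ∑ b ∈ s, μ (f ⁻¹' {b}) = 1 := by
    rw [sum_measure_preimage_singleton s hf, ← measure_univ (μ := μ)]
    refine (ae_mem_iff_measure_eq ?_).1 hs
    rw [← Finset.set_biUnion_preimage_singleton]
    exact (Finset.measurableSet_biUnion s hf).nullMeasurableSet
  rw [Finset.sum_congr rfl fun b hb => hconst b hb a ha, Finset.sum_const, nsmul_eq_mul,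
    mul_comm] at hsum
  exact ENNReal.eq_inv_of_mul_eq_one_left hsum

section IIDSample

variable {ι α : Type*} [Fintype ι] [MeasurableSpace α] (μ : Measure α) [IsProbabilityMeasure μ]

lemma measure_pi_setOf_apply_eq_apply [MeasurableEq α] [NullSingletonClass μ] {i j : ι}
    (hij : i ≠ j) : Measure.pi (fun _ : ι => μ) {w | w i = w j} = 0 := by
  have hind : IndepFun (fun w : ι → α => w i) (fun w => w j) (Measure.pi fun _ => μ) :=
    (iIndepFun_pi (X := fun _ => id) fun _ => aemeasurable_id).indepFun hij
  have hmap := hind.map_prod_eq_prod_map_map (measurable_pi_apply i).aemeasurable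
    (measurable_pi_apply j).aemeasurable
  rw [(measurePreserving_eval _ i).map_eq, (measurePreserving_eval _ j).map_eq] at hmap
  have hdiag : {w : ι → α | w i = w j} = (fun w => (w i, w j)) ⁻¹' diagonal α := rfl
  rw [hdiag, ← Measure.map_apply (by fun_prop) measurableSet_diagonal, hmap,
    Measure.prod_apply measurableSet_diagonal]
  simp [preimage, diagonal]

lemma ae_injective_pi [MeasurableEq α] [NullSingletonClass μ] :
    ∀ᵐ w ∂Measure.pi (fun _ : ι => μ), Function.Injective w := by
  have h : {w : ι → α | ¬ Function.Injective w} ⊆ ⋃ i, ⋃ j, ⋃ (_ : i ≠ j), {w | w i = w j} := by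
    intro w hw
    simp only [Function.Injective, not_forall] at hw
    obtain ⟨i, j, hij, hne⟩ := hw
    exact mem_iUnion₂.2 ⟨i, j, mem_iUnion.2 ⟨hne, hij⟩⟩
  exact ae_iff.2 <| measure_mono_null h <| measure_iUnion_null fun i => measure_iUnion_null
    fun j => measure_iUnion_null fun hij => measure_pi_setOf_apply_eq_apply μ hij

lemma measurePreserving_comp_perm (σ : Equiv.Perm ι) :
    MeasurePreserving (fun w : ι → α => w ∘ σ) (Measure.pi fun _ => μ)
      (Measure.pi fun _ => μ) :=
  (measurePreserving_piCongrLeft (fun _ => μ) σ).symm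

end IIDSample

section BelowOrderStat

variable {N : ℕ}

lemma measurableSet_mem_belowOrderStat {k : ℕ} (hk : k < N) (i : Fin N) :
    MeasurableSet {w : Fin N → ℝ | i ∈ belowOrderStat w (k + 1)} := by
  simp only [mem_belowOrderStat]
  exact measurableSet_lt (measurable_pi_apply i) (measurable_orderStat k.succ_pos hk)

lemma measurableSet_belowOrderStat_eq {k : ℕ} (hk : k < N) (S : Finset (Fin N)) :
    MeasurableSet {w : Fin N → ℝ | belowOrderStat w (k + 1) = S} := by
  simp only [Finset.ext_iff, ofPred_forall]
  exact MeasurableSet.iInter fun i =>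
    (measurableSet_mem_belowOrderStat hk i).iff (MeasurableSet.const _)

variable (μ : Measure ℝ) [IsProbabilityMeasure μ]

lemma ae_card_belowOrderStat [NullSingletonClass μ] {k : ℕ} (hk : k < N) :
    ∀ᵐ w ∂Measure.pi (fun _ : Fin N => μ), (belowOrderStat w (k + 1)).card = k :=
  (ae_injective_pi μ).mono fun _ hw => card_belowOrderStat hw k.succ_pos hk

lemma measure_belowOrderStat_eq_of_card_eq {k : ℕ} (hk : k < N) {S T : Finset (Fin N)}
    (h : S.card = T.card) :
    Measure.pi (fun _ => μ) {w | belowOrderStat w (k + 1) = S} =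
      Measure.pi (fun _ => μ) {w | belowOrderStat w (k + 1) = T} := by
  obtain ⟨σ, hσ⟩ : ∃ σ : Equiv.Perm (Fin N), T.image σ = S := by
    have := Set.powersetCard.isPretransitive (α := Fin N) (n := S.card)
    obtain ⟨σ, hσ⟩ := this.exists_smul_eq ⟨T, h.symm⟩ ⟨S, rfl⟩
    exact ⟨σ, congrArg Subtype.val hσ⟩
  rw [← (measurePreserving_comp_perm μ σ).measure_preimage
    (measurableSet_belowOrderStat_eq hk T).nullMeasurableSet]
  congr 1
  ext w
  simp only [mem_preimage, mem_ofPred_eq, ← hσ, Finset.ext_iff, mem_belowOrderStat_comp_perm]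
  rw [← σ.forall_congr_right]
  simp [σ.injective.eq_iff]

theorem measure_belowOrderStat_eq [NullSingletonClass μ] {k : ℕ} (hk : k < N)
    {S : Finset (Fin N)} (hS : S.card = k) :
    Measure.pi (fun _ => μ) {w | belowOrderStat w (k + 1) = S} = (N.choose k : ℝ≥0∞)⁻¹ := by
  have h := measure_preimage_singleton_eq_inv_card (μ := Measure.pi fun _ => μ)
    (f := (belowOrderStat · (k + 1))) (s := Finset.univ.powersetCard k)
    (fun T _ => measurableSet_belowOrderStat_eq hk T) ?_ ?_ (a := S) ?_
  · rwa [Finset.card_powersetCard, Finset.card_univ, Fintype.card_fin] at h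
  · filter_upwards [ae_card_belowOrderStat μ hk] with w hw
    simpa using hw
  · intro T hT T' hT'
    rw [Finset.mem_powersetCard] at hT hT'
    exact measure_belowOrderStat_eq_of_card_eq μ hk (hT.2.trans hT'.2.symm)
  · simpa using hS

theorem measure_card_inter_belowOrderStat_eq [NullSingletonClass μ] {k : ℕ} (hk : k < N)
    (A : Finset (Fin N)) {u : ℕ} (hu : u ≤ k) :
    Measure.pi (fun _ => μ) {w | (A ∩ belowOrderStat w (k + 1)).card = u} =
      A.card.choose u * (N - A.card).choose (k - u) / N.choose k := by
  set P := (Finset.univ.powersetCard k).filter fun S => (A ∩ S).card = u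
  have hae : {w | (A ∩ belowOrderStat w (k + 1)).card = u} =ᵐ[Measure.pi fun _ => μ]
      (belowOrderStat · (k + 1)) ⁻¹' P := by
    refine Filter.eventuallyEq_set.2 ?_
    filter_upwards [ae_card_belowOrderStat μ hk] with w hw
    simp [P, hw]
  have hfiber : ∀ S ∈ P, Measure.pi (fun _ => μ) ((belowOrderStat · (k + 1)) ⁻¹' {S}) =
      (N.choose k : ℝ≥0∞)⁻¹ := fun S hS =>
    measure_belowOrderStat_eq μ hk (Finset.mem_powersetCard.1 (Finset.mem_filter.1 hS).1).2
  rw [measure_congr hae, ← sum_measure_preimage_singleton P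
    fun S _ => measurableSet_belowOrderStat_eq hk S, Finset.sum_eq_card_nsmul hfiber,
    nsmul_eq_mul, card_filter_powersetCard_card_inter A hu, Fintype.card_fin, div_eq_mul_inv]
  push_cast
  ring

lemma measure_mem_belowOrderStat_eq {k : ℕ} (hk : k < N) (i j : Fin N) :
    Measure.pi (fun _ => μ) {w | i ∈ belowOrderStat w (k + 1)} =
      Measure.pi (fun _ => μ) {w | j ∈ belowOrderStat w (k + 1)} := by
  rw [← (measurePreserving_comp_perm μ (Equiv.swap i j)).measure_preimage
    (measurableSet_mem_belowOrderStat hk j).nullMeasurableSet]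
  congr 1
  ext w
  simp only [mem_preimage, mem_ofPred_eq, mem_belowOrderStat_comp_perm, Equiv.swap_apply_right]

lemma integral_card_inter_belowOrderStat_eq_card_mul {k : ℕ} (hk : k < N) (A : Finset (Fin N))
    (i : Fin N) :
    ∫ w, ((A ∩ belowOrderStat w (k + 1)).card : ℝ) ∂Measure.pi (fun _ => μ) =
      A.card * (Measure.pi (fun _ => μ)).real {w | i ∈ belowOrderStat w (k + 1)} := by
  have hsum (w : Fin N → ℝ) : ((A ∩ belowOrderStat w (k + 1)).card : ℝ) =
      ∑ j ∈ A, {w : Fin N → ℝ | j ∈ belowOrderStat w (k + 1)}.indicator 1 w := by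
    rw [← Finset.filter_mem_eq_inter, Finset.card_filter]
    push_cast
    simp [Set.indicator_apply]
  simp_rw [hsum]
  rw [integral_finsetSum _ fun j _ =>
    (integrable_const 1).indicator (measurableSet_mem_belowOrderStat hk j)]
  rw [Finset.sum_eq_card_nsmul fun j _ => ?_, nsmul_eq_mul]
  rw [integral_indicator_one (measurableSet_mem_belowOrderStat hk j), measureReal_def,
    measureReal_def, measure_mem_belowOrderStat_eq μ hk j i]

theorem integral_card_inter_belowOrderStat [NullSingletonClass μ] {k : ℕ} (hk : k < N)
    (A : Finset (Fin N)) :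
    ∫ w, ((A ∩ belowOrderStat w (k + 1)).card : ℝ) ∂Measure.pi (fun _ => μ) =
      A.card * k / N := by
  have i : Fin N := ⟨0, by omega⟩
  have hk_eq : (k : ℝ) = N * (Measure.pi (fun _ => μ)).real {w | i ∈ belowOrderStat w (k + 1)} :=
    calc (k : ℝ)
      _ = ∫ w, ((Finset.univ ∩ belowOrderStat w (k + 1)).card : ℝ) ∂Measure.pi (fun _ => μ) := by
        rw [integral_congr_ae (g := fun _ => (k : ℝ)) ((ae_card_belowOrderStat μ hk).mono
          fun w hw => by simp only [Finset.univ_inter, hw])]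
        simp
      _ = _ := by
        rw [integral_card_inter_belowOrderStat_eq_card_mul μ hk, Finset.card_univ,
          Fintype.card_fin]
  have hN : (N : ℝ) ≠ 0 := Nat.cast_ne_zero.2 (by omega)
  rw [integral_card_inter_belowOrderStat_eq_card_mul μ hk A i, hk_eq]
  field_simp

end BelowOrderStat

/-- For `N = m + n` odd and `Z₁, …, Z_N` i.i.d. with continuous distribution
function, the number `M†` of the first `m` observations lying strictly below the combined
sample median (the `((N+1)/2)`-th order statistic) follows the hypergeometric distribution
`HG(N, m, (N-1)/2)`; in particular `E[M†] = (m/2)(1 - 1/(m+n))`. -/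
theorem stmt_7
    (μ : Measure ℝ) [IsProbabilityMeasure μ]
    (hFcont : Continuous fun x => (μ (Set.Iic x)).toReal)
    (m n N : ℕ) (hN : N = m + n) (hodd : N % 2 = 1) :
    (∀ u : ℕ, u ≤ (N - 1) / 2 →
      ((Measure.pi fun _ : Fin N => μ)
          {w | (Finset.univ.filter fun i : Fin N =>
              (i : ℕ) < m ∧ w i < orderStat w ((N + 1) / 2)).card = u}).toReal
        = (m.choose u * n.choose ((N - 1) / 2 - u) : ℝ) / (N.choose ((N - 1) / 2) : ℝ)) ∧
    (∫ w, ((Finset.univ.filter fun i : Fin N =>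
          (i : ℕ) < m ∧ w i < orderStat w ((N + 1) / 2)).card : ℝ)
        ∂(Measure.pi fun _ : Fin N => μ))
      = (m : ℝ) / 2 * (1 - 1 / ((m : ℝ) + n)) := by
  obtain ⟨k, hk⟩ : ∃ k, N = 2 * k + 1 := ⟨N / 2, by omega⟩
  rw [show (N - 1) / 2 = k by omega, show (N + 1) / 2 = k + 1 by omega]
  have := nullSingletonClass_of_continuous_cdf μ hFcont
  set A := Finset.univ.filter fun i : Fin N => (i : ℕ) < m
  have hA : A.card = m := by simp [A, Fin.card_filter_val_lt]; omega
  have hM (w : Fin N → ℝ) : (Finset.univ.filter fun i : Fin N =>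
      (i : ℕ) < m ∧ w i < orderStat w (k + 1)) = A ∩ belowOrderStat w (k + 1) :=
    Finset.filter_and _ _ _
  simp_rw [hM]
  refine ⟨fun u hu => ?_, ?_⟩
  · rw [measure_card_inter_belowOrderStat_eq μ (by omega) A hu, hA, show N - m = n by omega]
    simp [ENNReal.toReal_div]
  · rw [integral_card_inter_belowOrderStat μ (by omega) A, hA, ← Nat.cast_add, ← hN, hk]
    push_cast
    field_simp
    ring
end
end

section
/- Let X, Y, Y' be independent, X with density f and distribution function F, and Y, Y' with density f(·−θ); let k be a kernel symmetric about the origin with ∫ k = 1, ∫ t^2|k(t)|dt < ∞, and K(t) = ∫_{-∞}^t k(u)du. If f is continuously differentiable with bounded derivative, then as h → 0, E[ K((X−Y)/h) K((X−Y')/h) ] = ∫_{-∞}^∞ f(x) F(x−θ)^2 dx + O(h^2). -/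
open MeasureTheory ProbabilityTheory Filter Asymptotics Set
open scoped Topology ENNReal NNReal BigOperators

noncomputable section

/-!
Conditioning on `X = x`, the expectation is `∫ f(x) G_h(x)² dx` with `G_h(x) = E K((x - Y)/h)`,
and Fubini gives `G_h(x) = ∫ k(s) F(x - θ - h s) ds`. Since `f` is Lipschitz,
`F(t - a) = F(t) - a f(t) + O(a²)`; the symmetric kernel kills the linear term, so
`G_h(x) = F(x - θ) + O(h²)` uniformly in `x`, and as `G_h + F(· - θ)` is bounded this passes to
the squares.
-/

namespace Kfun

variable {k : ℝ → ℝ}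

theorem sub_eq_intervalIntegral (hk : Integrable k) (a b : ℝ) :
    Kfun k b - Kfun k a = ∫ s in a..b, k s :=
  intervalIntegral.integral_Iic_sub_Iic hk.integrableOn hk.integrableOn

theorem continuous (hk : Integrable k) : Continuous (Kfun k) := by
  have : Kfun k = fun t => Kfun k 0 + ∫ s in (0:ℝ)..t, k s := by
    funext t; rw [← sub_eq_intervalIntegral hk]; ring
  rw [this]
  exact continuous_const.add (hk.continuous_primitive 0)

theorem abs_le_integral_abs (hk : Integrable k) (t : ℝ) : |Kfun k t| ≤ ∫ s, |k s| :=
  (abs_integral_le_integral_abs).trans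
    (setIntegral_le_integral hk.abs (Eventually.of_forall fun _ => abs_nonneg _))

theorem abs_sub_sub_add_mul_le {C : ℝ≥0} (hk : Integrable k) (hlip : LipschitzWith C k)
    (t a : ℝ) : |Kfun k (t - a) - Kfun k t + a * k t| ≤ C * a ^ 2 := by
  have hrepr : Kfun k (t - a) - Kfun k t + a * k t = ∫ u in (t - a)..t, (k t - k u) := by
    rw [intervalIntegral.integral_sub intervalIntegrable_const hk.intervalIntegrable,
      ← sub_eq_intervalIntegral hk, intervalIntegral.integral_const, smul_eq_mul]
    ring
  have hbound : ∀ u ∈ Set.uIoc (t - a) t, ‖k t - k u‖ ≤ C * |a| := by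
    intro u hu
    have hdist : |t - u| ≤ |a| := by
      simpa using abs_sub_right_of_mem_uIcc (Set.uIoc_subset_uIcc hu)
    calc ‖k t - k u‖ = dist (k t) (k u) := rfl
      _ ≤ C * dist t u := hlip.dist_le_mul t u
      _ ≤ C * |a| := by gcongr; exact hdist
  calc |Kfun k (t - a) - Kfun k t + a * k t|
      ≤ C * |a| * |t - (t - a)| := by
        rw [hrepr]; exact intervalIntegral.norm_integral_le_of_norm_le_const hbound
    _ = C * a ^ 2 := by rw [sub_sub_cancel, mul_assoc, abs_mul_abs_self, sq]

end Kfun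

theorem integral_Kfun_div_sub_mul {k f : ℝ → ℝ} (hk : Integrable k) (hf : Integrable f)
    {h : ℝ} (hh : 0 < h) (t : ℝ) :
    ∫ u, Kfun k ((t - u) / h) * f u = ∫ s, k s * Kfun f (t - h * s) := by
  set S := {p : ℝ × ℝ | p.1 ≤ t - h * p.2}
  have hleft : ∀ u s, (Iic ((t - u) / h)).indicator k s * f u
      = S.indicator (fun p => f p.1 * k p.2) (u, s) := by
    intro u s
    have hiff : s ≤ (t - u) / h ↔ u ≤ t - h * s := by
      rw [le_div_iff₀ hh]; constructor <;> intro <;> linarith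
    by_cases hs : u ≤ t - h * s
    · simp [S, hs, hiff.2 hs, mul_comm]
    · simp [S, hs, hiff.not.2 hs]
  have hright : ∀ u s, k s * (Iic (t - h * s)).indicator f u
      = S.indicator (fun p => f p.1 * k p.2) (u, s) := by
    intro u s
    by_cases hs : u ≤ t - h * s
    · simp [S, hs, mul_comm]
    · simp [S, hs]
  have hint : Integrable (S.indicator fun p => f p.1 * k p.2) (volume.prod volume) :=
    (hf.mul_prod hk).indicator (measurableSet_le (by fun_prop) (by fun_prop))
  calc ∫ u, Kfun k ((t - u) / h) * f u
      = ∫ u, ∫ s, S.indicator (fun p => f p.1 * k p.2) (u, s) := by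
        simp_rw [← hleft, integral_mul_const, integral_indicator measurableSet_Iic, Kfun]
    _ = ∫ s, ∫ u, S.indicator (fun p => f p.1 * k p.2) (u, s) := integral_integral_swap hint
    _ = ∫ s, k s * Kfun f (t - h * s) := by
        simp_rw [← hright, integral_const_mul, integral_indicator measurableSet_Iic, Kfun]

theorem integral_id_mul_eq_zero_of_even {k : ℝ → ℝ} (hk : ∀ t, k (-t) = k t) :
    ∫ s, s * k s = 0 := by
  have h := integral_neg_eq_self (fun s => s * k s) volume
  simp only [hk, neg_mul, integral_neg] at h
  linarith

theorem MeasureTheory.Integrable.id_mul_of_sq_mul_abs {k : ℝ → ℝ} (hk : Integrable k)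
    (hk2 : Integrable fun t => t ^ 2 * |k t|) : Integrable fun t => t * k t := by
  refine (hk.abs.add hk2).mono' (by fun_prop) (Eventually.of_forall fun s => ?_)
  have : |s| ≤ 1 + s ^ 2 := by nlinarith [abs_nonneg s, sq_abs s, sq_nonneg (|s| - 1)]
  rw [Pi.add_apply, Real.norm_eq_abs, abs_mul]
  nlinarith [abs_nonneg (k s)]

theorem abs_integral_mul_comp_sub_sub_le {k F : ℝ → ℝ} (hksym : ∀ t, k (-t) = k t)
    (hk : Integrable k) (hk1 : ∫ t, k t = 1) (hk2 : Integrable fun t => t ^ 2 * |k t|)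
    (hF : Measurable F) {C D t : ℝ} (hFt : ∀ a, |F (t - a) - F t + a * D| ≤ C * a ^ 2)
    (h : ℝ) : |(∫ s, k s * F (t - h * s)) - F t| ≤ C * (∫ s, s ^ 2 * |k s|) * h ^ 2 := by
  set r : ℝ → ℝ := fun s => k s * (F (t - h * s) - F t + h * s * D)
  have hr : ∀ s, ‖r s‖ ≤ C * h ^ 2 * (s ^ 2 * |k s|) := fun s => by
    calc ‖r s‖ = |k s| * |F (t - h * s) - F t + h * s * D| := abs_mul _ _
      _ ≤ |k s| * (C * (h * s) ^ 2) := by gcongr; exact hFt _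
      _ = C * h ^ 2 * (s ^ 2 * |k s|) := by ring
  have hrint : Integrable r :=
    (hk2.const_mul _).mono' (by fun_prop) (Eventually.of_forall hr)
  have hsplit : (fun s => k s * F (t - h * s))
      = fun s => r s + F t * k s - h * D * (s * k s) := by
    funext s; simp only [r]; ring
  have hmean : (∫ s, k s * F (t - h * s)) - F t = ∫ s, r s := by
    have hsum : Integrable fun s => r s + F t * k s := hrint.add (hk.const_mul _)
    have hodd : Integrable fun s => h * D * (s * k s) := (hk.id_mul_of_sq_mul_abs hk2).const_mul _
    rw [hsplit, integral_sub hsum hodd, integral_add hrint (hk.const_mul _), integral_const_mul,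
      integral_const_mul, hk1, integral_id_mul_eq_zero_of_even hksym]
    ring
  calc |(∫ s, k s * F (t - h * s)) - F t| = ‖∫ s, r s‖ := by rw [hmean]; rfl
    _ ≤ ∫ s, C * h ^ 2 * (s ^ 2 * |k s|) :=
      norm_integral_le_of_norm_le (hk2.const_mul _) (Eventually.of_forall hr)
    _ = C * (∫ s, s ^ 2 * |k s|) * h ^ 2 := by rw [integral_const_mul]; ring

section DensMeasure

variable {f : ℝ → ℝ}

theorem integral_densMeasure (hf : AEMeasurable f) (hf0 : ∀ x, 0 ≤ f x) (g : ℝ → ℝ) :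
    ∫ x, g x ∂densMeasure f = ∫ x, f x * g x := by
  rw [densMeasure, integral_withDensity_eq_integral_toReal_smul₀ hf.ennreal_ofReal
    (Eventually.of_forall fun _ => ENNReal.ofReal_lt_top)]
  simp_rw [ENNReal.toReal_ofReal (hf0 _), smul_eq_mul]

theorem isProbabilityMeasure_densMeasure (hf0 : ∀ x, 0 ≤ f x) (hfi : ∫ x, f x = 1) :
    IsProbabilityMeasure (densMeasure f) := by
  have hfI : Integrable f := .of_integral_ne_zero (by rw [hfi]; exact one_ne_zero)
  constructor
  rw [densMeasure, withDensity_apply _ MeasurableSet.univ, Measure.restrict_univ,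
    ← ofReal_integral_eq_lintegral_ofReal hfI (Eventually.of_forall hf0), hfi, ENNReal.ofReal_one]

end DensMeasure

section Product

variable {α β : Type*} [MeasurableSpace α] [MeasurableSpace β]
  {μ : Measure α} {ν : Measure β}

theorem integral_prod_mul_self_eq_integral_sq [IsFiniteMeasure μ] [IsFiniteMeasure ν]
    {φ : α → β → ℝ} (hφ : StronglyMeasurable (Function.uncurry φ)) {M : ℝ}
    (hM : ∀ x y, |φ x y| ≤ M) :
    ∫ p : α × β × β, φ p.1 p.2.1 * φ p.1 p.2.2 ∂μ.prod (ν.prod ν)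
      = ∫ x, (∫ y, φ x y ∂ν) ^ 2 ∂μ := by
  have hmeas : StronglyMeasurable fun p : α × β × β => φ p.1 p.2.1 * φ p.1 p.2.2 :=
    (hφ.comp_measurable (g := fun p : α × β × β => (p.1, p.2.1)) (by fun_prop)).mul
      (hφ.comp_measurable (g := fun p : α × β × β => (p.1, p.2.2)) (by fun_prop))
  have hint : Integrable (fun p : α × β × β => φ p.1 p.2.1 * φ p.1 p.2.2)
      (μ.prod (ν.prod ν)) :=
    .of_bound hmeas.aestronglyMeasurable (M * M) <| Eventually.of_forall fun p => by
      rw [Real.norm_eq_abs, abs_mul]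
      exact mul_le_mul (hM _ _) (hM _ _) (abs_nonneg _) ((abs_nonneg _).trans (hM p.1 p.2.1))
  rw [integral_prod _ hint]
  simp_rw [integral_prod_mul, sq]

theorem abs_integral_sq_sub_integral_sq_le [IsProbabilityMeasure μ] {G H : α → ℝ}
    (hG : AEStronglyMeasurable G μ) (hH : AEStronglyMeasurable H μ) {A B ε : ℝ}
    (hGA : ∀ x, |G x| ≤ A) (hHB : ∀ x, |H x| ≤ B) (hGH : ∀ x, |G x - H x| ≤ ε) :
    |∫ x, G x ^ 2 ∂μ - ∫ x, H x ^ 2 ∂μ| ≤ (A + B) * ε := by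
  have hsq : ∀ {g : α → ℝ} {c : ℝ}, AEStronglyMeasurable g μ → (∀ x, |g x| ≤ c) →
      Integrable (fun x => g x ^ 2) μ := fun hg hgc =>
    .of_bound (hg.pow 2) (_ ^ 2) <| Eventually.of_forall fun x => by
      rw [Real.norm_eq_abs, abs_pow]
      exact pow_le_pow_left₀ (abs_nonneg _) (hgc x) 2
  have hpt : ∀ x, ‖G x ^ 2 - H x ^ 2‖ ≤ (A + B) * ε := fun x => by
    have hsum : |G x + H x| ≤ A + B := (abs_add_le _ _).trans (add_le_add (hGA x) (hHB x))
    rw [Real.norm_eq_abs, sq_sub_sq, abs_mul]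
    exact mul_le_mul hsum (hGH x) (abs_nonneg _) ((abs_nonneg _).trans hsum)
  rw [← integral_sub (hsq hG hGA) (hsq hH hHB)]
  simpa using norm_integral_le_of_norm_le_const (μ := μ) (Eventually.of_forall hpt)

end Product

theorem integral_Kfun_div_map_densMeasure {k f : ℝ → ℝ} (hk : Integrable k)
    (hf : Integrable f) (hf0 : ∀ x, 0 ≤ f x) {h : ℝ} (hh : 0 < h) (θ x : ℝ) :
    ∫ y, Kfun k ((x - y) / h) ∂(densMeasure f).map (· + θ)
      = ∫ s, k s * Kfun f (x - θ - h * s) := by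
  have hcont : Continuous fun y => Kfun k ((x - y) / h) :=
    (Kfun.continuous hk).comp (by fun_prop)
  rw [integral_map (measurable_add_const θ).aemeasurable hcont.aestronglyMeasurable,
    integral_densMeasure hf.aemeasurable hf0, ← integral_Kfun_div_sub_mul hk hf hh]
  simp_rw [mul_comm (f _), sub_add_eq_sub_sub_swap]

/-- For independent `X` (density `f`) and `Y, Y'` (density `f(· - θ)`),
as `h → 0⁺`, `E[K((X-Y)/h) K((X-Y')/h)] = ∫ f(x) F(x-θ)² dx + O(h²)`. -/
theorem stmt_12
    (f : ℝ → ℝ) (hf0 : ∀ x, 0 ≤ f x) (hfi : ∫ x, f x = 1)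
    (F : ℝ → ℝ) (hF : ∀ x, F x = ∫ t in Set.Iic x, f t)
    (hfC : ContDiff ℝ 1 f) (hfd : ∃ C, ∀ x, |deriv f x| ≤ C)
    (k : ℝ → ℝ) (hksym : ∀ t, k (-t) = k t) (hkInt : Integrable k) (hk1 : ∫ t, k t = 1)
    (hk2 : Integrable fun t => t ^ 2 * |k t|) (θ : ℝ) :
    (fun h : ℝ => (∫ p : ℝ × ℝ × ℝ,
          Kfun k ((p.1 - p.2.1) / h) * Kfun k ((p.1 - p.2.2) / h)
          ∂((densMeasure f).prod
            (((densMeasure f).map (· + θ)).prod ((densMeasure f).map (· + θ)))))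
        - ∫ x, f x * F (x - θ) ^ 2) =O[𝓝[>] (0:ℝ)] fun h : ℝ => h ^ 2 := by
  obtain ⟨C, hC⟩ := hfd
  obtain rfl : F = Kfun f := funext hF
  have hfI : Integrable f := .of_integral_ne_zero (by rw [hfi]; exact one_ne_zero)
  have hlip : LipschitzWith C.toNNReal f :=
    lipschitzWith_of_nnnorm_deriv_le (hfC.differentiable one_ne_zero) fun x => by
      rw [← NNReal.coe_le_coe, coe_nnnorm, Real.norm_eq_abs]
      exact (hC x).trans (Real.le_coe_toNNReal C)
  have := isProbabilityMeasure_densMeasure hf0 hfi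
  have := Measure.isProbabilityMeasure_map (μ := densMeasure f)
    (measurable_add_const θ).aemeasurable
  refine isBigO_iff.2 ⟨((∫ s, |k s|) + (∫ s, |f s|)) * (C.toNNReal * ∫ s, s ^ 2 * |k s|),
    eventually_nhdsWithin_of_forall fun h hh => ?_⟩
  have hφ : Continuous fun p : ℝ × ℝ => Kfun k ((p.1 - p.2) / h) :=
    (Kfun.continuous hkInt).comp (by fun_prop)
  have hG : StronglyMeasurable
      fun x => ∫ y, Kfun k ((x - y) / h) ∂(densMeasure f).map (· + θ) :=
    hφ.stronglyMeasurable.integral_prod_right'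
  have hH : Continuous fun x => Kfun f (x - θ) := (Kfun.continuous hfI).comp (by fun_prop)
  rw [integral_prod_mul_self_eq_integral_sq (φ := fun x y => Kfun k ((x - y) / h))
      hφ.stronglyMeasurable (fun _ _ => Kfun.abs_le_integral_abs hkInt _),
    ← integral_densMeasure hfI.aemeasurable hf0, Real.norm_eq_abs, Real.norm_eq_abs,
    abs_of_nonneg (sq_nonneg h), mul_assoc]
  refine abs_integral_sq_sub_integral_sq_le (μ := densMeasure f) hG.aestronglyMeasurable
    hH.aestronglyMeasurable    (fun x => ?_) (fun x => Kfun.abs_le_integral_abs hfI _) (fun x => ?_)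
  · simpa using norm_integral_le_of_norm_le_const (μ := (densMeasure f).map (· + θ))
      (f := fun y => Kfun k ((x - y) / h))
      (Eventually.of_forall fun y => Kfun.abs_le_integral_abs hkInt ((x - y) / h))
  · rw [integral_Kfun_div_map_densMeasure hkInt hfI hf0 hh]
    exact abs_integral_mul_comp_sub_sub_le hksym hkInt hk1 hk2 (Kfun.continuous hfI).measurable
      (Kfun.abs_sub_sub_add_mul_le hfI hlip (x - θ)) h
end
end

section
/- Let F be a distribution function with density f that is continuous and positive at the median z_0 of F (F(z_0) = 1/2). Let λ_N → λ with 0 < λ < 1, fix ξ > 0, and set θ_N = ξ/√N. Let z_{θ_N,N} denote the median of the mixture distribution G_{θ_N,N}(x) = λ_N F(x) + (1−λ_N) F(x−θ_N). Then √N ( z_{θ_N,N} − z_0 ) → (1−λ) ξ as N → ∞; that is, z_{θ_N,N} = z_0 + N^{-1/2}(1−λ)ξ + o(N^{-1/2}). -/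
/-! Expanding `F` to first order at `z₀`, the rescaled mixture
`√N (G_{θ_N,N}(z₀ + c/√N) - 1/2)` tends to `f(z₀) (c - (1-λ) ξ)`, a linear function of `c` with
positive slope that vanishes at `c = (1-λ) ξ`. Since `G_{θ_N,N}` is monotone, for every `ε > 0`
its median is eventually trapped between `z₀ + ((1-λ) ξ ∓ ε)/√N`. -/

open MeasureTheory ProbabilityTheory Filter Asymptotics Set
open scoped Topology ENNReal NNReal BigOperators

noncomputable section

theorem monotone_integral_Iic {f : ℝ → ℝ} (hf0 : ∀ x, 0 ≤ f x) (hf : Integrable f) :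
    Monotone fun x => ∫ t in Iic x, f t := fun _ _ hxy =>
  setIntegral_mono_set hf.integrableOn (Eventually.of_forall hf0)
    (Iic_subset_Iic.2 hxy).eventuallyLE

theorem hasDerivAt_integral_Iic {f : ℝ → ℝ} {z : ℝ} (hf : Integrable f)
    (hfc : ContinuousAt f z) : HasDerivAt (fun x => ∫ t in Iic x, f t) (f z) z := by
  have hint : HasDerivAt (fun x => (∫ t in Iic z, f t) + ∫ t in z..x, f t) (f z) z :=
    (intervalIntegral.integral_hasDerivAt_right hf.intervalIntegrable
      hf.aestronglyMeasurable.stronglyMeasurableAtFilter hfc).const_add _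
  refine hint.congr_of_eventuallyEq (Eventually.of_forall fun x => ?_)
  simp only [← intervalIntegral.integral_Iic_sub_Iic hf.integrableOn hf.integrableOn]
  ring

theorem HasDerivAt.tendsto_mul_sub_of_tendsto_atTop {F : ℝ → ℝ} {d z : ℝ}
    (hF : HasDerivAt F d z) {ι : Type*} {L : Filter ι} {s : ι → ℝ} (hs : Tendsto s L atTop)
    (c : ℝ) : Tendsto (fun i => s i * (F (z + c / s i) - F z)) L (𝓝 (d * c)) := by
  have hstep : Tendsto (fun i => c / s i) L (𝓝 0) := tendsto_const_nhds.div_atTop hs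
  have hrem : (fun i => s i * (F (z + c / s i) - F z - c / s i * d)) =o[L]
      fun i => s i * (c / s i) :=
    (isBigO_refl s L).mul_isLittleO
      ((hasDerivAt_iff_isLittleO_nhds_zero.1 hF).comp_tendsto hstep)
  have hcancel : (fun i => s i * (c / s i)) =ᶠ[L] fun _ => c := by
    filter_upwards [hs.eventually_ne_atTop 0] with i hi
    field_simp
  have hrem0 := (isLittleO_one_iff ℝ).1
    ((hrem.congr' EventuallyEq.rfl hcancel).trans_isBigO (isBigO_const_const c one_ne_zero L))
  refine (by simpa using hrem0.add_const (d * c) : Tendsto _ L _).congr' ?_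
  filter_upwards [hs.eventually_ne_atTop 0] with i hi
  field_simp
  ring

/-- The paper's `G_{θ,N}`, with `w = λ_N`. -/
def shiftMixture (F : ℝ → ℝ) (w θ x : ℝ) : ℝ := w * F x + (1 - w) * F (x - θ)

theorem Monotone.shiftMixture {F : ℝ → ℝ} (hF : Monotone F) {w : ℝ} (hw0 : 0 ≤ w)
    (hw1 : w ≤ 1) (θ : ℝ) : Monotone (_root_.shiftMixture F w θ) :=
  (hF.const_mul hw0).add
    ((hF.comp fun _ _ hxy => sub_le_sub_right hxy θ).const_mul (sub_nonneg.2 hw1))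

theorem tendsto_mul_shiftMixture_sub {F : ℝ → ℝ} {d z p : ℝ} (hF : HasDerivAt F d z)
    (hFz : F z = p) {ι : Type*} {L : Filter ι} {w : ι → ℝ} {l : ℝ} (hw : Tendsto w L (𝓝 l))
    {s : ι → ℝ} (hs : Tendsto s L atTop) (ξ c : ℝ) :
    Tendsto (fun i => s i * (shiftMixture F (w i) (ξ / s i) (z + c / s i) - p)) L
      (𝓝 (d * (c - (1 - l) * ξ))) := by
  have hlim := (hw.mul (hF.tendsto_mul_sub_of_tendsto_atTop hs c)).add
    (((tendsto_const_nhds (x := (1 : ℝ))).sub hw).mul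
      (hF.tendsto_mul_sub_of_tendsto_atTop hs (c - ξ)))
  convert hlim using 1
  · ext i
    rw [shiftMixture, ← hFz, sub_div, ← add_sub_assoc]
    ring
  · ring_nf

theorem sInf_setOf_le_mem_Icc {G : ℝ → ℝ} (hG : Monotone G) {p a b : ℝ} (ha : G a < p)
    (hb : p ≤ G b) : sInf {x | p ≤ G x} ∈ Icc a b := by
  have hlower : a ∈ lowerBounds {x | p ≤ G x} := fun x hx =>
    le_of_lt (hG.reflect_lt (ha.trans_le hx))
  exact ⟨le_csInf ⟨b, hb⟩ hlower, csInf_le ⟨a, hlower⟩ hb⟩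

theorem tendsto_mul_sInf_setOf_le_sub {ι : Type*} {L : Filter ι} {G : ι → ℝ → ℝ}
    {s : ι → ℝ} {p z c₀ κ : ℝ} (hG : ∀ᶠ i in L, Monotone (G i)) (hs : ∀ᶠ i in L, 0 < s i)
    (hκ : 0 < κ)
    (hlim : ∀ c, Tendsto (fun i => s i * (G i (z + c / s i) - p)) L (𝓝 (κ * (c - c₀)))) :
    Tendsto (fun i => s i * (sInf {x | p ≤ G i x} - z)) L (𝓝 c₀) := by
  have hbelow : ∀ a < c₀, ∀ᶠ i in L, G i (z + a / s i) < p := fun a ha => by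
    filter_upwards [(hlim a).eventually_lt_const (mul_neg_of_pos_of_neg hκ (sub_neg.2 ha)), hs]
      with i hi hsi
    exact sub_neg.1 (neg_of_mul_neg_right hi hsi.le)
  have habove : ∀ b > c₀, ∀ᶠ i in L, p ≤ G i (z + b / s i) := fun b hb => by
    filter_upwards [(hlim b).eventually_const_lt (mul_pos hκ (sub_pos.2 hb)), hs]
      with i hi hsi
    exact (sub_pos.1 (pos_of_mul_pos_right hi hsi.le)).le
  have hbracket : ∀ a < c₀, ∀ b > c₀,
      ∀ᶠ i in L, s i * (sInf {x | p ≤ G i x} - z) ∈ Icc a b := fun a ha b hb => by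
    filter_upwards [hG, hs, hbelow a ha, habove b hb] with i hGi hsi hai hbi
    obtain ⟨hlo, hhi⟩ := sInf_setOf_le_mem_Icc hGi hai hbi
    exact ⟨(div_le_iff₀' hsi).1 (le_sub_iff_add_le'.2 hlo),
      (le_div_iff₀' hsi).1 (sub_le_iff_le_add'.2 hhi)⟩
  refine tendsto_order.2 ⟨fun a' ha' => ?_, fun b' hb' => ?_⟩
  · obtain ⟨a, ha'a, hac⟩ := exists_between ha'
    filter_upwards [hbracket a hac (c₀ + 1) (lt_add_one c₀)] with i hi
    exact ha'a.trans_le hi.1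
  · obtain ⟨b, hcb, hbb'⟩ := exists_between hb'
    filter_upwards [hbracket (c₀ - 1) (sub_one_lt c₀) b hcb] with i hi
    exact hi.2.trans_lt hbb'

theorem stmt_18_general
    (f : ℝ → ℝ) (hf0 : ∀ x, 0 ≤ f x) (hfint : Integrable f)
    (F : ℝ → ℝ) (hF : ∀ x, F x = ∫ t in Set.Iic x, f t)
    (z₀ : ℝ) (hmed : F z₀ = 1 / 2) (hfc : ContinuousAt f z₀) (hfpos : 0 < f z₀)
    (lam : ℕ → ℝ) (l : ℝ) (hl0 : 0 < l) (hl1 : l < 1)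
    (hlam : Tendsto lam atTop (𝓝 l))
    (ξ : ℝ) :
    Tendsto (fun N : ℕ => Real.sqrt N *
        (sInf {x : ℝ | 1 / 2 ≤ lam N * F x + (1 - lam N) * F (x - ξ / Real.sqrt N)} - z₀))
      atTop (𝓝 ((1 - l) * ξ)) := by
  have hFmono : Monotone F := funext hF ▸ monotone_integral_Iic hf0 hfint
  have hFderiv : HasDerivAt F (f z₀) z₀ := funext hF ▸ hasDerivAt_integral_Iic hfint hfc
  have hsqrt : Tendsto (fun N : ℕ => Real.sqrt N) atTop atTop :=
    Real.tendsto_sqrt_atTop.comp tendsto_natCast_atTop_atTop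
  have hmono : ∀ᶠ N in atTop, Monotone (shiftMixture F (lam N) (ξ / Real.sqrt N)) := by
    filter_upwards [hlam.eventually_const_lt hl0, hlam.eventually_lt_const hl1] with N h0 h1
    exact hFmono.shiftMixture h0.le h1.le _
  exact tendsto_mul_sInf_setOf_le_sub hmono (hsqrt.eventually_gt_atTop 0) hfpos
    (tendsto_mul_shiftMixture_sub hFderiv hmed hlam hsqrt ξ)

/-- Let `z₀` be the median of `F` (density `f` continuous and positive at
`z₀`), `λ_N → λ ∈ (0,1)`, `ξ > 0`, `θ_N = ξ/√N`, and let `z_{θ_N,N}` be the median of the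
mixture `G_{θ_N,N}(x) = λ_N F(x) + (1-λ_N) F(x-θ_N)`. Then
`√N (z_{θ_N,N} - z₀) → (1-λ) ξ`. -/
theorem stmt_18
    (f : ℝ → ℝ) (hf0 : ∀ x, 0 ≤ f x) (hfm : Measurable f) (hfint : Integrable f)
    (hfi : ∫ x, f x = 1)
    (F : ℝ → ℝ) (hF : ∀ x, F x = ∫ t in Set.Iic x, f t)
    (z₀ : ℝ) (hmed : F z₀ = 1 / 2) (hfc : ContinuousAt f z₀) (hfpos : 0 < f z₀)
    (lam : ℕ → ℝ) (l : ℝ) (hl0 : 0 < l) (hl1 : l < 1)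
    (hlam : Tendsto lam atTop (𝓝 l))
    (ξ : ℝ) (hξ : 0 < ξ) :
    Tendsto (fun N : ℕ => Real.sqrt N *
        (sInf {x : ℝ | 1 / 2 ≤ lam N * F x + (1 - lam N) * F (x - ξ / Real.sqrt N)} - z₀))
      atTop (𝓝 ((1 - l) * ξ)) :=
  stmt_18_general f hf0 hfint F hF z₀ hmed hfc hfpos lam l hl0 hl1 hlam ξ
end
end
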